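/- arXiv:1611.04740 — 5 statements merged into one kernel-verified Lean document; each statement's English description precedes it below -/
import Mathlib

section
/- Validity of axiom A3: in every model M and world w, M,w ⊨ O(A ↔ B) if and only if M,w ⊨ (A ◁ B) ∧ (B ◁ A). -/
/-- Supervenience: M,w ⊨ A ◁ B -/
def sup {W : Type*} (S : W → W → W → Prop) (w : W) (A B : W → Prop) : Prop :=
  ∀ u v, S w u v → (A u ↔ A v) → (B u ↔ B v)

/-- Agreement: M,w ⊨ O A -/
def ag {W : Type*} (S : W → W → W → Prop) (w : W) (A : W → Prop) : Prop :=
  ∀ u v, S w u v → (A u ↔ A v)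

theorem iff_iff_iff_comm (a b a' b' : Prop) :
    ((a ↔ b) ↔ (a' ↔ b')) ↔ ((a ↔ a') ↔ (b ↔ b')) := by
  tauto

theorem axiom_A3_general {W : Type*} (S : W → W → W → Prop) (w : W)
    (A B : W → Prop) :
    ag S w (fun u => A u ↔ B u) ↔ (sup S w A B ∧ sup S w B A) := by
  simp only [ag, sup, ← forall_and]
  exact forall₂_congr fun u v => imp_congr_right fun _ =>
    (iff_iff_iff_comm _ _ _ _).trans iff_iff_implies_and_implies

theorem axiom_A3 {W : Type*} [Nonempty W] (S : W → W → W → Prop) (w : W)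
    (A B : W → Prop) :
    ag S w (fun u => A u ↔ B u) ↔ (sup S w A B ∧ sup S w B A) :=
  axiom_A3_general S w A B
end

section
/- Invariance of the agreement language under O-bisimulation: let M = (W,S,V) and M' = (W',S',V') be models and R ⊆ W×W' be an O-bisimulation. Then for all (w,w') ∈ R and all formulas A of the language with propositional connectives and the unary modality O, M,w ⊨ A iff M',w' ⊨ A. -/
structure Model where
  W : Type
  S : W → W → W → Prop
  V : ℕ → W → Prop

/-- Formulas of the agreement language: atoms, ¬, ∧, O. -/
inductive Fm where
  | atom : ℕ → Fm
  | neg : Fm → Fm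
  | conj : Fm → Fm → Fm
  | agree : Fm → Fm

def sat (M : Model) : M.W → Fm → Prop
  | w, .atom n => M.V n w
  | w, .neg A => ¬ sat M w A
  | w, .conj A B => sat M w A ∧ sat M w B
  | w, .agree A => ∀ u v, M.S w u v → (sat M u A ↔ sat M v A)

/-- O-bisimulation between models M and M'. -/
def OBisim (M M' : Model) (R : M.W → M'.W → Prop) : Prop :=
  (∃ w w', R w w') ∧
  ∀ w w', R w w' →
    ((∀ n, M.V n w ↔ M'.V n w') ∧
    (∀ u v x, M.S w u v → M.S w u x → ∃ u' v' x',
      M'.S w' u' v' ∧ M'.S w' u' x' ∧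
      ∃ y' z₁' z₂',
        (y' = u' ∨ y' = v' ∨ y' = x') ∧ (z₁' = u' ∨ z₁' = v' ∨ z₁' = x') ∧
        (z₂' = u' ∨ z₂' = v' ∨ z₂' = x') ∧ R u y' ∧ R v z₁' ∧ R x z₂') ∧
    (∀ u' v' x', M'.S w' u' v' → M'.S w' u' x' → ∃ u v x,
      M.S w u v ∧ M.S w u x ∧
      ∃ y z₁ z₂,
        (y = u ∨ y = v ∨ y = x) ∧ (z₁ = u ∨ z₁ = v ∨ z₁ = x) ∧
        (z₂ = u ∨ z₂ = v ∨ z₂ = x) ∧ R y u' ∧ R z₁ v' ∧ R z₂ x'))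
section AgreementTransfer

variable {α β : Type*} {S : α → α → Prop} {S' : β → β → Prop} {R : α → β → Prop}

theorem iff_of_eq_or_eq_or_eq {P : α → Prop} {u v x y : α} (huv : P u ↔ P v) (hux : P u ↔ P x)
    (hy : y = u ∨ y = v ∨ y = x) : P y ↔ P u := by
  rcases hy with rfl | rfl | rfl
  exacts [Iff.rfl, huv.symm, hux.symm]

-- `P` is constant on the triple, and both ends of the `S'`-pair are `R`-related to points of it.
theorem forall_iff_of_matched {P : α → Prop} {Q : β → Prop} (hPQ : ∀ a b, R a b → (P a ↔ Q b))
    (hmatch : ∀ u' v', S' u' v' → ∃ u v x, S u v ∧ S u x ∧ ∃ y z,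
      (y = u ∨ y = v ∨ y = x) ∧ (z = u ∨ z = v ∨ z = x) ∧ R y u' ∧ R z v')
    (hP : ∀ u v, S u v → (P u ↔ P v)) : ∀ u' v', S' u' v' → (Q u' ↔ Q v') := by
  intro u' v' hS'
  obtain ⟨u, v, x, huv, hux, y, z, hy, hz, hyu', hzv'⟩ := hmatch u' v' hS'
  calc Q u' ↔ P y := (hPQ y u' hyu').symm
    _ ↔ P z := (iff_of_eq_or_eq_or_eq (hP u v huv) (hP u x hux) hy).trans
        (iff_of_eq_or_eq_or_eq (hP u v huv) (hP u x hux) hz).symm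
    _ ↔ Q v' := hPQ z v' hzv'

end AgreementTransfer

namespace OBisim

variable {M M' : Model} {R : M.W → M'.W → Prop} {w : M.W} {w' : M'.W}

theorem zag_pair (h : OBisim M M' R) (hR : R w w') :
    ∀ u' v', M'.S w' u' v' → ∃ u v x, M.S w u v ∧ M.S w u x ∧ ∃ y z,
      (y = u ∨ y = v ∨ y = x) ∧ (z = u ∨ z = v ∨ z = x) ∧ R y u' ∧ R z v' := by
  intro u' v' hS'
  obtain ⟨u, v, x, huv, hux, y, z, -, hy, hz, -, hyu', hzv', -⟩ :=
    (h.2 w w' hR).2.2 u' v' v' hS' hS'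
  exact ⟨u, v, x, huv, hux, y, z, hy, hz, hyu', hzv'⟩

theorem zig_pair (h : OBisim M M' R) (hR : R w w') :
    ∀ u v, M.S w u v → ∃ u' v' x', M'.S w' u' v' ∧ M'.S w' u' x' ∧ ∃ y' z',
      (y' = u' ∨ y' = v' ∨ y' = x') ∧ (z' = u' ∨ z' = v' ∨ z' = x') ∧ R u y' ∧ R v z' := by
  intro u v hS
  obtain ⟨u', v', x', huv', hux', y', z', -, hy', hz', -, hyu, hzv, -⟩ :=
    (h.2 w w' hR).2.1 u v v hS hS
  exact ⟨u', v', x', huv', hux', y', z', hy', hz', hyu, hzv⟩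

end OBisim

theorem OBisim_invariance (M M' : Model) (R : M.W → M'.W → Prop)
    (h : OBisim M M' R) :
    ∀ w w', R w w' → ∀ A : Fm, sat M w A ↔ sat M' w' A := by
  intro w w' hR A
  induction A generalizing w w' with
  | atom n => exact (h.2 w w' hR).1 n
  | neg A ih => exact not_congr (ih w w' hR)
  | conj A B ihA ihB => exact and_congr (ihA w w' hR) (ihB w w' hR)
  | agree A ih =>
    exact ⟨forall_iff_of_matched ih (h.zag_pair hR),
      forall_iff_of_matched (R := flip R) (fun u' u hR => (ih u u' hR).symm) (h.zig_pair hR)⟩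
end

section
/- The supervenience language is strictly more expressive than the agreement language: there exist two pointed models (M,s) and (M',s') (each with four worlds) such that (M,s) and (M',s') satisfy the same formulas of the language with O, yet M,s ⊨ p ◁ q and M',s' ⊭ p ◁ q. Concretely: M has worlds {s,t,u,v}, S_s = {(t,u),(t,v)}, all other S empty, V(p) = {s,t}, V(q) = {s,v}; M' has worlds {s',t',u',v'}, S'_{s'} = {(t',u'),(t',v')}, all other S' empty, V'(p) = {s',v'}, V'(q) = {s',t'}. Then the relation R = {(s,s'),(t,v'),(v,t'),(u,u')} is an O-bisimulation containing (s,s'), M,s ⊨ p ◁ q, and M',s' ⊭ p ◁ q. -/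
/-- Supervenience: M,w ⊨ A ◁ B for formulas A, B. -/
def supSat (M : Model) (w : M.W) (A B : Fm) : Prop :=
  ∀ u v, M.S w u v → (sat M u A ↔ sat M v A) → (sat M u B ↔ sat M v B)

/-- Model M: worlds s=0, t=1, u=2, v=3; S_s = {(t,u),(t,v)}; V(p)={s,t}, V(q)={s,v}. -/
abbrev M1 : Model where
  W := Fin 4
  S := fun w x y => w = 0 ∧ x = 1 ∧ (y = 2 ∨ y = 3)
  V := fun n x => (n = 0 ∧ (x = 0 ∨ x = 1)) ∨ (n = 1 ∧ (x = 0 ∨ x = 3))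

/-- Model M': worlds s'=0, t'=1, u'=2, v'=3; S'_{s'} = {(t',u'),(t',v')};
V'(p)={s',v'}, V'(q)={s',t'}. -/
abbrev M2 : Model where
  W := Fin 4
  S := fun w x y => w = 0 ∧ x = 1 ∧ (y = 2 ∨ y = 3)
  V := fun n x => (n = 0 ∧ (x = 0 ∨ x = 3)) ∨ (n = 1 ∧ (x = 0 ∨ x = 1))

/-- R = {(s,s'),(t,v'),(v,t'),(u,u')} -/
abbrev R13 : M1.W → M2.W → Prop :=
  fun x y => (x = 0 ∧ y = 0) ∨ (x = 1 ∧ y = 3) ∨ (x = 3 ∧ y = 1) ∨ (x = 2 ∧ y = 2)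

/-! Formulas with `O` are invariant under O-bisimulation, by induction on formulas. In the
`O`-case, (O-Zig) matches a pair `(u, v)` of `S_w` with a fan `(u', v'), (u', x')` of `S'_{w'}`
containing images of `u` and `v`; as `O A` holds at `w'`, every world of that fan agrees with `u'`
on `A`, hence so do those images. The relation `R` does not preserve `S`, but it maps the worlds
`t, u, v` of the only nonempty fan onto `v', u', t'`, which is all (O-Zig) and (O-Zag) ask. Yet
`p ◁ q` holds at `s`, where `t` disagrees on `p` with both its partners, and fails at `s'`, where
`t'` and `u'` agree on `p` but not on `q`. -/

/-- (O-Zag) is `OZig M' M (flip R) w' w`. -/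
def OZig (M M' : Model) (R : M.W → M'.W → Prop) (w : M.W) (w' : M'.W) : Prop :=
  ∀ u v x, M.S w u v → M.S w u x → ∃ u' v' x',
    M'.S w' u' v' ∧ M'.S w' u' x' ∧
    ∃ y' z₁' z₂',
      (y' = u' ∨ y' = v' ∨ y' = x') ∧ (z₁' = u' ∨ z₁' = v' ∨ z₁' = x') ∧
      (z₂' = u' ∨ z₂' = v' ∨ z₂' = x') ∧ R u y' ∧ R v z₁' ∧ R x z₂'

theorem sat_iff_of_mem_fan {M : Model} {A : Fm} {w u v x y z : M.W}
    (hO : sat M w (.agree A)) (hv : M.S w u v) (hx : M.S w u x)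
    (hy : y = u ∨ y = v ∨ y = x) (hz : z = u ∨ z = v ∨ z = x) : sat M y A ↔ sat M z A := by
  have agree_base : ∀ t, t = u ∨ t = v ∨ t = x → (sat M t A ↔ sat M u A) := by
    rintro t (rfl | rfl | rfl)
    · rfl
    · exact (hO _ _ hv).symm
    · exact (hO _ _ hx).symm
  exact (agree_base y hy).trans (agree_base z hz).symm

section OZig

variable {M M' : Model} {R : M.W → M'.W → Prop} {w : M.W} {w' : M'.W}

theorem OBisim.zig (hR : OBisim M M' R) (h : R w w') : OZig M M' R w w' :=
  (hR.2 w w' h).2.1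

theorem OBisim.zag (hR : OBisim M M' R) (h : R w w') : OZig M' M (flip R) w' w :=
  (hR.2 w w' h).2.2

theorem oZig_of_not_S (h : ∀ u v, ¬ M.S w u v) : OZig M M' R w w' :=
  fun u v _ huv _ ↦ (h u v huv).elim

theorem oZig_of_fan_image {a' b' c' : M'.W} (hb : M'.S w' a' b') (hc : M'.S w' a' c')
    (himage : ∀ u v, M.S w u v →
      (∃ y', (y' = a' ∨ y' = b' ∨ y' = c') ∧ R u y') ∧ ∃ z', (z' = a' ∨ z' = b' ∨ z' = c') ∧ R v z') :
    OZig M M' R w w' := by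
  intro u v x huv hux
  obtain ⟨⟨y', hy', hu⟩, z₁', hz₁', hv⟩ := himage u v huv
  obtain ⟨z₂', hz₂', hx⟩ := (himage u x hux).2
  exact ⟨a', b', c', hb, hc, y', z₁', z₂', hy', hz₁', hz₂', hu, hv, hx⟩

theorem sat_agree_of_oZig {A : Fm} (hzig : OZig M M' R w w')
    (hA : ∀ a a', R a a' → (sat M a A ↔ sat M' a' A)) (hO : sat M' w' (.agree A)) :
    sat M w (.agree A) := by
  intro u v huv
  obtain ⟨u', v', x', hv', hx', y', z', -, hy', hz', -, hu, hv, -⟩ := hzig u v v huv huv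
  calc sat M u A ↔ sat M' y' A := hA _ _ hu
    _ ↔ sat M' z' A := sat_iff_of_mem_fan hO hv' hx' hy' hz'
    _ ↔ sat M v A := (hA _ _ hv).symm

theorem OBisim.sat_iff (hR : OBisim M M' R) (h : R w w') (A : Fm) : sat M w A ↔ sat M' w' A := by
  induction A generalizing w w' with
  | atom n => exact (hR.2 w w' h).1 n
  | neg A ih => exact (ih h).not
  | conj A B ihA ihB => exact and_congr (ihA h) (ihB h)
  | agree A ih =>
    exact ⟨sat_agree_of_oZig (hR.zag h) fun _ _ h' ↦ (ih h').symm,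
      sat_agree_of_oZig (hR.zig h) fun _ _ h' ↦ ih h'⟩

end OZig

theorem oBisim_M1_M2 : OBisim M1 M2 R13 := by
  have atoms : ∀ w w', R13 w w' → ∀ n, M1.V n w ↔ M2.V n w' := by
    rintro w w' h (_ | _ | n)
    iterate 2 · revert w w'; decide
    simp
  refine ⟨⟨0, 0, Or.inl ⟨rfl, rfl⟩⟩, fun w w' h ↦ ⟨atoms w w' h, ?_⟩⟩
  rcases h with ⟨rfl, rfl⟩ | ⟨rfl, rfl⟩ | ⟨rfl, rfl⟩ | ⟨rfl, rfl⟩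
  · constructor <;>
    · refine oZig_of_fan_image (a' := 1) (b' := 2) (c' := 3) (by decide) (by decide) ?_
      rintro u v ⟨-, rfl, rfl | rfl⟩ <;> decide
  all_goals exact ⟨oZig_of_not_S fun _ _ h ↦ absurd h.1 (by decide),
    oZig_of_not_S fun _ _ h ↦ absurd h.1 (by decide)⟩

theorem supSat_M1 : supSat M1 0 (.atom 0) (.atom 1) := by
  simp only [supSat, sat]
  decide

theorem not_supSat_M2 : ¬ supSat M2 0 (.atom 0) (.atom 1) := by
  simp only [supSat, sat]
  decide

theorem sup_more_expressive :
    OBisim M1 M2 R13 ∧ R13 0 0 ∧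
    (∀ A : Fm, sat M1 (0 : Fin 4) A ↔ sat M2 (0 : Fin 4) A) ∧
    supSat M1 (0 : Fin 4) (.atom 0) (.atom 1) ∧
    ¬ supSat M2 (0 : Fin 4) (.atom 0) (.atom 1) :=
  ⟨oBisim_M1_M2, Or.inl ⟨rfl, rfl⟩, oBisim_M1_M2.sat_iff (Or.inl ⟨rfl, rfl⟩), supSat_M1,
    not_supSat_M2⟩
end

section
/- Definability of the determinacy operator via non-contingency (case n = 1): for every Kripke model M = (W,R,V) and world w, M,w ⊨ D(A;B) if and only if M,w ⊨ (Δ(A → B) ∨ Δ(A → ¬B)) ∧ (Δ(¬A → B) ∨ Δ(¬A → ¬B)). -/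
/-!
Both sides say that `B` takes a single truth value on the `A`-successors of `w` and a single one
on the `¬A`-successors. For a guard `P`, the disjunct `Δ(P → B)` holds when `B` is true at every
`P`-successor and `Δ(P → ¬B)` when `B` is false at every `P`-successor, since then the formula is
true at all successors; conversely either disjunct forces `B` to agree at any two `P`-successors.
-/

/-- Non-contingency: M,w ⊨ Δ C. -/
def nonCont {W : Type*} (R : W → W → Prop) (w : W) (C : W → Prop) : Prop :=
  ∀ u v, R w u → R w v → (C u ↔ C v)

/-- Determinacy: M,w ⊨ D(A;B). -/
def det {W : Type*} (R : W → W → Prop) (w : W) (A B : W → Prop) : Prop :=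
  ∀ u v, R w u → R w v → (A u ↔ A v) → (B u ↔ B v)

section

variable {W : Type*} (R : W → W → Prop) (w : W)

def nonContOn (P B : W → Prop) : Prop :=
  ∀ u v, R w u → R w v → P u → P v → (B u ↔ B v)

variable {R w}

theorem nonCont_of_forall {C : W → Prop} (h : ∀ u, R w u → C u) : nonCont R w C :=
  fun u v hu hv => iff_of_true (h u hu) (h v hv)

theorem nonCont_imp_or_nonCont_imp_not_iff (P B : W → Prop) :
    (nonCont R w (fun u => P u → B u) ∨ nonCont R w (fun u => P u → ¬ B u)) ↔
      nonContOn R w P B := by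
  constructor
  · rintro (h | h) u v hu hv hPu hPv
    · simpa only [hPu, hPv, true_implies] using h u v hu hv
    · simpa only [hPu, hPv, true_implies, not_iff_not] using h u v hu hv
  · intro h
    by_cases hB : ∃ u₀, R w u₀ ∧ P u₀ ∧ B u₀
    · obtain ⟨u₀, hu₀, hPu₀, hBu₀⟩ := hB
      exact Or.inl <| nonCont_of_forall fun u hu hPu => (h u₀ u hu₀ hu hPu₀ hPu).mp hBu₀
    · push Not at hB
      exact Or.inr <| nonCont_of_forall hB

theorem det_iff_nonContOn_and_nonContOn_not (A B : W → Prop) :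
    det R w A B ↔ nonContOn R w A B ∧ nonContOn R w (fun u => ¬ A u) B := by
  constructor
  · intro h
    exact ⟨fun u v hu hv hAu hAv => h u v hu hv (iff_of_true hAu hAv),
      fun u v hu hv hAu hAv => h u v hu hv (iff_of_false hAu hAv)⟩
  · rintro ⟨hA, hNotA⟩ u v hu hv hAuv
    by_cases hAu : A u
    · exact hA u v hu hv hAu (hAuv.mp hAu)
    · exact hNotA u v hu hv hAu (mt hAuv.mpr hAu)

end

theorem det_def_nonCont_general {W : Type*} (R : W → W → Prop)
    (w : W) (A B : W → Prop) :
    det R w A B ↔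
      ((nonCont R w (fun u => A u → B u) ∨ nonCont R w (fun u => A u → ¬ B u)) ∧
       (nonCont R w (fun u => ¬ A u → B u) ∨ nonCont R w (fun u => ¬ A u → ¬ B u))) := by
  rw [det_iff_nonContOn_and_nonContOn_not, nonCont_imp_or_nonCont_imp_not_iff,
    nonCont_imp_or_nonCont_imp_not_iff (fun u => ¬ A u)]

theorem det_def_nonCont {W : Type*} (R : W → W → Prop) (V : ℕ → W → Prop)
    (w : W) (A B : W → Prop) :
    det R w A B ↔
      ((nonCont R w (fun u => A u → B u) ∨ nonCont R w (fun u => A u → ¬ B u)) ∧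
       (nonCont R w (fun u => ¬ A u → B u) ∨ nonCont R w (fun u => ¬ A u → ¬ B u))) :=
  det_def_nonCont_general R w A B
end

section
/- Reduction of relativized supervenience to relativized agreement: in every model M and world w, M,w ⊨ A ◁^C B if and only if M,w ⊨ O(A ∧ C, B) ∧ O(¬A ∧ C, B). Here M,w ⊨ A ◁^C B iff for all u,v with S_w u v, M,u ⊨ C and M,v ⊨ C, if (M,u ⊨ A ↔ M,v ⊨ A) then (M,u ⊨ B ↔ M,v ⊨ B); and M,w ⊨ O(X,B) iff for all u,v with S_w u v, if M,u ⊨ X and M,v ⊨ X, then M,u ⊨ B ↔ M,v ⊨ B. -/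
/-- Relativized supervenience: M,w ⊨ A ◁^C B. -/
def supRel {W : Type*} (S : W → W → W → Prop) (w : W) (A C B : W → Prop) : Prop :=
  ∀ u v, S w u v → C u → C v → (A u ↔ A v) → (B u ↔ B v)

/-- Relativized agreement: M,w ⊨ O(X, B). -/
def agRel {W : Type*} (S : W → W → W → Prop) (w : W) (X B : W → Prop) : Prop :=
  ∀ u v, S w u v → X u → X v → (B u ↔ B v)

section

variable {W : Type*} {S : W → W → W → Prop} {w : W} {A C B X : W → Prop}

theorem agRel_of_supRel (h : supRel S w A C B) (hXC : ∀ u, X u → C u)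
    (hXA : ∀ u v, X u → X v → (A u ↔ A v)) : agRel S w X B :=
  fun u v hs hu hv => h u v hs (hXC u hu) (hXC v hv) (hXA u v hu hv)

theorem supRel_of_agRel (hpos : agRel S w (fun u => A u ∧ C u) B)
    (hneg : agRel S w (fun u => ¬ A u ∧ C u) B) : supRel S w A C B := by
  intro u v hs hCu hCv hA
  by_cases hAu : A u
  · exact hpos u v hs ⟨hAu, hCu⟩ ⟨hA.mp hAu, hCv⟩
  · exact hneg u v hs ⟨hAu, hCu⟩ ⟨mt hA.mpr hAu, hCv⟩

end

theorem supRel_iff_agRel_general {W : Type*} (S : W → W → W → Prop) (w : W)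
    (A C B : W → Prop) :
    supRel S w A C B ↔
      (agRel S w (fun u => A u ∧ C u) B ∧ agRel S w (fun u => ¬ A u ∧ C u) B) :=
  ⟨fun h => ⟨agRel_of_supRel h (fun _ hu => hu.2) (fun _ _ hu hv => iff_of_true hu.1 hv.1),
      agRel_of_supRel h (fun _ hu => hu.2) (fun _ _ hu hv => iff_of_false hu.1 hv.1)⟩,
    fun ⟨hpos, hneg⟩ => supRel_of_agRel hpos hneg⟩

theorem supRel_iff_agRel {W : Type*} [Nonempty W] (S : W → W → W → Prop) (w : W)
    (A C B : W → Prop) :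
    supRel S w A C B ↔
      (agRel S w (fun u => A u ∧ C u) B ∧ agRel S w (fun u => ¬ A u ∧ C u) B) :=
  supRel_iff_agRel_general S w A C B
end
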